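/- arXiv:0905.4597 — 2 statements merged into one kernel-verified Lean document; each statement's English description precedes it below -/
import Mathlib

section
/- Let S = K[x_1,...,x_n] be a polynomial ring over a field K, I ⊂ S a monomial ideal, and v a monomial with v ∉ I. Then sdepth_S(I : v) ≥ sdepth_S(I). -/
open MvPolynomial

/-- The set of exponent vectors of monomials in the Stanley space `aK[Z]`. -/
def stanleyCell {n : ℕ} (a : Fin n →₀ ℕ) (Z : Finset (Fin n)) : Set (Fin n →₀ ℕ) :=
  {b | (∀ i, a i ≤ b i) ∧ ∀ i, i ∉ Z → b i = a i}

/-- A Stanley decomposition of a set `M` of exponent vectors: a finite family of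
Stanley spaces whose monomial sets partition `M`. -/
def IsStanleyDecomp {n : ℕ} (M : Set (Fin n →₀ ℕ))
    (D : Finset ((Fin n →₀ ℕ) × Finset (Fin n))) : Prop :=
  (∀ p ∈ D, stanleyCell p.1 p.2 ⊆ M) ∧
    ∀ b ∈ M, ∃! p : (Fin n →₀ ℕ) × Finset (Fin n), p ∈ D ∧ b ∈ stanleyCell p.1 p.2

/-- Stanley depth of a set of exponent vectors. -/
noncomputable def sdepthSet {n : ℕ} (M : Set (Fin n →₀ ℕ)) : ℕ :=
  sSup {k | ∃ D, IsStanleyDecomp M D ∧ ∀ p ∈ D, k ≤ p.2.card}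

/-- The set of exponent vectors of monomials belonging to an ideal. -/
def monoSet {K : Type} [Field K] {n : ℕ} (I : Ideal (MvPolynomial (Fin n) K)) :
    Set (Fin n →₀ ℕ) := {d | (monomial d (1 : K)) ∈ I}

/-- Stanley depth of a monomial ideal. -/
noncomputable def sdepthIdeal {K : Type} [Field K] {n : ℕ}
    (I : Ideal (MvPolynomial (Fin n) K)) : ℕ := sdepthSet (monoSet I)

/-- Stanley depth of the quotient `J/I` of monomial ideals. -/
noncomputable def sdepthQuot {K : Type} [Field K] {n : ℕ}
    (I J : Ideal (MvPolynomial (Fin n) K)) : ℕ := sdepthSet (monoSet J \ monoSet I)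

/-- Depth of a module with respect to an ideal `m`: the supremum of lengths of
regular sequences on `M` consisting of elements of `m`. -/
noncomputable def mdepth {R : Type} [CommRing R] (m : Ideal R)
    (M : Type) [AddCommGroup M] [Module R M] : ℕ :=
  sSup {k | ∃ rs : List R, rs.length = k ∧ (∀ r ∈ rs, r ∈ m) ∧
    RingTheory.Sequence.IsRegular M rs}

/-- The maximal graded ideal `(x_1, ..., x_n)`. -/
noncomputable def maxIdeal (K : Type) [Field K] (n : ℕ) : Ideal (MvPolynomial (Fin n) K) :=
  Ideal.span (Set.range X)

/-- `J/I` as a module. -/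
abbrev idealQuot {R : Type} [CommRing R] (I J : Ideal R) :=
  ↥J ⧸ (Submodule.comap J.subtype I)

/-- A monomial ideal: generated by monomials. -/
def IsMonomialIdeal {K : Type} [Field K] {n : ℕ}
    (I : Ideal (MvPolynomial (Fin n) K)) : Prop :=
  ∃ G : Set (Fin n →₀ ℕ), I = Ideal.span ((fun d => (monomial d (1 : K))) '' G)

/-- A squarefree monomial ideal: generated by squarefree monomials. -/
def IsSqfreeMonomialIdeal {K : Type} [Field K] {n : ℕ}
    (I : Ideal (MvPolynomial (Fin n) K)) : Prop :=
  ∃ G : Set (Fin n →₀ ℕ), (∀ d ∈ G, ∀ i, d i ≤ 1) ∧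
    I = Ideal.span ((fun d => (monomial d (1 : K))) '' G)

/-- The inclusion `K[x_1,...,x_{n-1}] → K[x_1,...,x_n]`. -/
noncomputable def extMap (K : Type) [Field K] (n : ℕ) :
    MvPolynomial (Fin n) K →+* MvPolynomial (Fin (n + 1)) K :=
  (rename (Fin.castSucc) : MvPolynomial (Fin n) K →ₐ[K] MvPolynomial (Fin (n + 1)) K).toRingHom

/-- Krull dimension of a module: dimension of `R / ann M`. -/
noncomputable def mdim (R : Type) [CommRing R]
    (M : Type) [AddCommGroup M] [Module R M] : WithBot (WithTop ℕ) :=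
  ringKrullDim (R ⧸ Module.annihilator R M)


/-! Multiplying the colon ideal `I : v` by `v` embeds its monomials into those of `I`, so a
Stanley decomposition `⨁ aᵢK[Zᵢ]` of `I` pulls back to one of `I : v`: keep the spaces whose
generators are divisible by `v` outside `Zᵢ`, and divide their generators by `v`. The pulled-back
spaces keep their sets `Zᵢ`, so their minimum size can only grow. -/

section StanleyDecomp

variable {n : ℕ}

theorem mem_stanleyCell_tsub_iff {a v b : Fin n →₀ ℕ} {Z : Finset (Fin n)}
    (hv : ∀ i ∉ Z, v i ≤ a i) :
    b ∈ stanleyCell (a - v) Z ↔ b + v ∈ stanleyCell a Z := by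
  simp only [stanleyCell, Set.mem_ofPred_eq, Finsupp.tsub_apply, Finsupp.add_apply]
  constructor
  · rintro ⟨hle, hout⟩
    exact ⟨fun i => by have := hle i; omega,
      fun i hi => by have := hout i hi; have := hv i hi; omega⟩
  · rintro ⟨hle, hout⟩
    exact ⟨fun i => by have := hle i; omega, fun i hi => by have := hout i hi; omega⟩

theorem IsStanleyDecomp.preimage_add_right [DecidableEq (Fin n →₀ ℕ)]
    {M : Set (Fin n →₀ ℕ)} {D : Finset ((Fin n →₀ ℕ) × Finset (Fin n))}
    (hD : IsStanleyDecomp M D) (v : Fin n →₀ ℕ) :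
    IsStanleyDecomp ((· + v) ⁻¹' M)
      ((D.filter fun p => ∀ i ∉ p.2, v i ≤ p.1 i).image fun p => (p.1 - v, p.2)) := by
  obtain ⟨hsub, hunique⟩ := hD
  constructor
  · simp only [Finset.mem_image, Finset.mem_filter]
    rintro _ ⟨p, ⟨hp, hpv⟩, rfl⟩ b hb
    exact hsub p hp ((mem_stanleyCell_tsub_iff hpv).mp hb)
  · intro b hb
    obtain ⟨p, ⟨hp, hbp⟩, hp_unique⟩ := hunique (b + v) hb
    have hpv : ∀ i ∉ p.2, v i ≤ p.1 i := fun i hi => by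
      have := hbp.2 i hi
      rw [Finsupp.add_apply] at this
      omega
    refine ⟨(p.1 - v, p.2), ⟨?_, (mem_stanleyCell_tsub_iff hpv).mpr hbp⟩, ?_⟩
    · exact Finset.mem_image.mpr ⟨p, Finset.mem_filter.mpr ⟨hp, hpv⟩, rfl⟩
    · simp only [Finset.mem_image, Finset.mem_filter]
      rintro _ ⟨⟨q, ⟨hq, hqv⟩, rfl⟩, hbq⟩
      rw [hp_unique q ⟨hq, (mem_stanleyCell_tsub_iff hqv).mp hbq⟩]

theorem le_sdepthSet {M : Set (Fin n →₀ ℕ)} (hM : M.Nonempty)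
    {D : Finset ((Fin n →₀ ℕ) × Finset (Fin n))} (hD : IsStanleyDecomp M D) {k : ℕ}
    (hk : ∀ p ∈ D, k ≤ p.2.card) : k ≤ sdepthSet M := by
  refine le_csSup ⟨n, ?_⟩ ⟨D, hD, hk⟩
  rintro k' ⟨D', hD', hk'⟩
  obtain ⟨b, hb⟩ := hM
  obtain ⟨p, ⟨hp, -⟩, -⟩ := hD'.2 b hb
  calc k' ≤ p.2.card := hk' p hp
    _ ≤ n := by simpa using Finset.card_le_univ p.2

theorem sdepthSet_le_sdepthSet_preimage_add_right {M : Set (Fin n →₀ ℕ)} {v : Fin n →₀ ℕ}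
    (hM : ∀ a ∈ M, a + v ∈ M) : sdepthSet M ≤ sdepthSet ((· + v) ⁻¹' M) := by
  classical
  rcases M.eq_empty_or_nonempty with rfl | ⟨a, ha⟩
  · rfl
  refine csSup_le' ?_
  rintro k ⟨D, hD, hk⟩
  refine le_sdepthSet ⟨a, hM a ha⟩ (hD.preimage_add_right v) ?_
  simp only [Finset.mem_image, Finset.mem_filter]
  rintro _ ⟨p, ⟨hp, -⟩, rfl⟩
  exact hk p hp

end StanleyDecomp

theorem monoSet_colon_span_monomial {K : Type} [Field K] {n : ℕ}
    (I : Ideal (MvPolynomial (Fin n) K)) (v : Fin n →₀ ℕ) :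
    monoSet (I.colon (Ideal.span {monomial v (1 : K)})) = (· + v) ⁻¹' monoSet I := by
  ext b
  simp only [monoSet, Set.mem_ofPred_eq, Set.mem_preimage, Ideal.mem_colon_span_singleton,
    monomial_mul, one_mul]

theorem sdepth_colon_ge_sdepth_general {K : Type} [Field K] {n : ℕ}
    (I : Ideal (MvPolynomial (Fin n) K))
    (v : Fin n →₀ ℕ) :
    sdepthIdeal (Submodule.colon I (Ideal.span {monomial v (1 : K)})) ≥ sdepthIdeal I := by
  rw [ge_iff_le, sdepthIdeal, sdepthIdeal, monoSet_colon_span_monomial]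
  refine sdepthSet_le_sdepthSet_preimage_add_right fun a ha => ?_
  simpa only [monoSet, Set.mem_ofPred_eq, monomial_mul, one_mul] using
    I.mul_mem_right (monomial v (1 : K)) ha

theorem sdepth_colon_ge_sdepth {K : Type} [Field K] {n : ℕ}
    (I : Ideal (MvPolynomial (Fin n) K)) (hI : IsMonomialIdeal I)
    (v : Fin n →₀ ℕ) (hv : (monomial v (1 : K)) ∉ I) :
    sdepthIdeal (Submodule.colon I (Ideal.span {monomial v (1 : K)})) ≥ sdepthIdeal I :=
  sdepth_colon_ge_sdepth_general I v
end

section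
/- Let S' = K[x_1,x_2,x_3], V = (x_1,x_2), U = V ∩ (x_1,x_3), S = S'[x_4], and W = (U + x_4V)S. Then depth_{S'}(V/U) = depth_{S'}(S'/U) = depth_{S'}(S'/V) = depth_S(S/W) = 1. -/
open MvPolynomial

/-!
Each module is a cyclic module `R ⧸ I` (for `V / U` via multiplication by the second generator of
`V`), where `I` is either a prime `P = (x_i : i ≠ j)` or an intersection `P ∩ Q` with a second prime
`Q` generated by variables. An element of `m` outside every minimal prime of `I` (`x_j`, or the sum
of `x_j` and a variable outside `Q`) is a nonzerodivisor on `R ⧸ I`, so the depth is at least one.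

For the upper bound, with `m` the maximal graded ideal, let `π : R → K[t]` send `x_j ↦ t` and the
other variables to `0`, so that `P = ker π`, and let `y = 1` if `I = P` and `y = x_j` if
`I = P ∩ Q`, so that `(I : y) = P`. If `r ∈ m` is regular on `R ⧸ I`, it is regular on
`R ⧸ (I + (y))` (which is `0` or `R ⧸ Q`) as well. For `s ∈ m`, both `π r` and `π s` are divisible
by `t`; choosing `a` with `π a = π r / t`, the element `y * a` is nonzero in `R ⧸ (I + (r))` but is
killed by `s`. Hence no regular sequence in `m` has length two.
-/

open RingTheory.Sequence Pointwise

section Depth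

variable {R : Type} [CommRing R]

theorem mdepth_congr {M N : Type} [AddCommGroup M] [Module R M] [AddCommGroup N] [Module R N]
    (m : Ideal R) (e : M ≃ₗ[R] N) : mdepth m M = mdepth m N := by
  simp only [mdepth, e.isRegular_congr]

theorem mdepth_eq_one {M : Type} [AddCommGroup M] [Module R M] {m : Ideal R} {r₀ : R}
    (hr₀ : r₀ ∈ m) (hreg : IsRegular M [r₀])
    (hle : ∀ r ∈ m, ∀ s ∈ m, IsSMulRegular M r → ¬ IsSMulRegular (QuotSMulTop r M) s) :
    mdepth m M = 1 := by
  have hbdd : 1 ∈ upperBounds {k | ∃ rs : List R, rs.length = k ∧ (∀ r ∈ rs, r ∈ m) ∧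
      IsRegular M rs} := by
    rintro k ⟨rs, rfl, hmem, hrs⟩
    match rs, hrs.toIsWeaklyRegular with
    | [], _ | [_], _ => simp
    | r :: s :: _, hw =>
      rw [isWeaklyRegular_cons_iff, isWeaklyRegular_cons_iff] at hw
      exact absurd hw.2.1 (hle r (hmem r (by simp)) s (hmem s (by simp)) hw.1)
  exact le_antisymm (csSup_le' hbdd) (le_csSup ⟨1, hbdd⟩ ⟨[r₀], rfl, by simpa, hreg⟩)

end Depth

section Quotient

variable {R : Type} [CommRing R] {I : Ideal R}

theorem mk_mem_smul_top_iff {r x : R} :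
    Ideal.Quotient.mk I x ∈ r • (⊤ : Submodule R (R ⧸ I)) ↔ x ∈ I ⊔ Ideal.span {r} := by
  rw [Submodule.mem_smul_pointwise_iff_exists, sup_comm, Ideal.mem_span_singleton_sup]
  constructor
  · rintro ⟨y, -, hy⟩
    obtain ⟨a, rfl⟩ := Ideal.Quotient.mk_surjective y
    refine ⟨a, x - a * r, ?_, by ring⟩
    rw [← Ideal.Quotient.eq_zero_iff_mem, map_sub, ← hy]
    simp [Algebra.smul_def, mul_comm]
  · rintro ⟨a, b, hb, rfl⟩
    refine ⟨Ideal.Quotient.mk I a, trivial, ?_⟩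
    simp [Algebra.smul_def, Ideal.Quotient.eq_zero_iff_mem.mpr hb, mul_comm]

theorem isSMulRegular_quotSMulTop_quotient_iff {r s : R} :
    IsSMulRegular (QuotSMulTop r (R ⧸ I)) s ↔
      ∀ x, s * x ∈ I ⊔ Ideal.span {r} → x ∈ I ⊔ Ideal.span {r} := by
  rw [isSMulRegular_quotient_iff_mem_of_smul_mem, Ideal.Quotient.mk_surjective.forall]
  simp only [← mk_mem_smul_top_iff, Algebra.smul_def]
  rfl

theorem isRegular_quotient_singleton {r : R} (hr : ∀ x, r * x ∈ I → x ∈ I)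
    (hne : I ⊔ Ideal.span {r} ≠ ⊤) : IsRegular (R ⧸ I) [r] := by
  refine (isRegular_cons_iff _ _ _).mpr
    ⟨(isSMulRegular_quotient_iff_mem_of_smul_mem I r).mpr hr, ?_⟩
  have : Nontrivial (QuotSMulTop r (R ⧸ I)) := by
    refine nontrivial_of_ne (Submodule.Quotient.mk (Ideal.Quotient.mk I 1)) 0 ?_
    rw [Ne, Submodule.Quotient.mk_eq_zero, mk_mem_smul_top_iff, ← Ideal.eq_top_iff_one]
    exact hne
  exact IsRegular.nil R _

theorem mdepth_quotient_eq_one {m : Ideal R} {r₀ : R} (hr₀m : r₀ ∈ m)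
    (hr₀ : ∀ x, r₀ * x ∈ I → x ∈ I) (hne : I ⊔ Ideal.span {r₀} ≠ ⊤)
    (hle : ∀ r ∈ m, ∀ s ∈ m, (∀ x, r * x ∈ I → x ∈ I) →
      ∃ x, s * x ∈ I ⊔ Ideal.span {r} ∧ x ∉ I ⊔ Ideal.span {r}) :
    mdepth m (R ⧸ I) = 1 := by
  refine mdepth_eq_one hr₀m (isRegular_quotient_singleton hr₀ hne) fun r hr s hs hreg hsreg => ?_
  obtain ⟨x, hsx, hx⟩ := hle r hr s hs ((isSMulRegular_quotient_iff_mem_of_smul_mem I r).mp hreg)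
  exact hx (isSMulRegular_quotSMulTop_quotient_iff.mp hsreg x hsx)

end Quotient

section ZeroDivisor

variable {R B F : Type} [CommRing R] [CommRing B] [IsDomain B] [FunLike F R B] [RingHomClass F R B]
  {π : F} {I : Ideal R}

theorem exists_mul_mem_sup_span_notMem (hπ : Function.Surjective π) {t : B}
    (ht : ¬ IsUnit t) {y r s : R} (hy : ∀ x, y * x ∈ I ↔ π x = 0)
    (hr : ∀ x, r * x ∈ I → x ∈ I)
    (hrQ : ∀ x, r * x ∈ I ⊔ Ideal.span {y} → x ∈ I ⊔ Ideal.span {y})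
    (htr : t ∣ π r) (hts : t ∣ π s) :
    ∃ x, s * x ∈ I ⊔ Ideal.span {r} ∧ x ∉ I ⊔ Ideal.span {r} := by
  have hπr : π r ≠ 0 := fun h0 => by
    have hy1 : y * 1 ∈ I := by
      rw [mul_one]; exact hr y (by rw [mul_comm]; exact (hy r).mpr h0)
    simpa using (hy 1).mp hy1
  obtain ⟨r', hr'⟩ := htr
  obtain ⟨s', hs'⟩ := hts
  obtain ⟨a, ha⟩ := hπ r'
  obtain ⟨b, hb⟩ := hπ s'
  simp only [sup_comm I, Ideal.mem_span_singleton_sup] at hrQ ⊢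
  refine ⟨y * a, ⟨y * b, y * (s * a - r * b), (hy _).mpr ?_, by ring⟩, ?_⟩
  · rw [map_sub, map_mul, map_mul, ha, hb, hr', hs']; ring
  rintro ⟨u, i, hi, hu⟩
  obtain ⟨v, j, hj, hv⟩ := hrQ u ⟨a, -i, I.neg_mem hi, by linear_combination -hu⟩
  have hav : π (a - r * v) = 0 := (hy _).mp <| by
    have : y * (a - r * v) = i + r * j := by linear_combination -hu - r * hv
    rw [this]; exact I.add_mem hi (I.mul_mem_left r hj)
  have hr'0 : r' ≠ 0 := by rintro rfl; rw [mul_zero] at hr'; exact hπr hr'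
  rw [map_sub, map_mul, ha, hr', sub_eq_zero] at hav
  exact ht (IsUnit.of_mul_eq_one (π v) (mul_left_cancel₀ hr'0 (by linear_combination -hav)))

theorem mul_mem_inf_iff {P Q : Ideal R} (hP : P.IsPrime) {y x : R} (hyP : y ∉ P) (hyQ : y ∈ Q) :
    y * x ∈ P ⊓ Q ↔ x ∈ P :=
  ⟨fun h => (hP.mem_or_mem (Ideal.mem_inf.mp h).1).resolve_left hyP,
    fun h => Ideal.mem_inf.mpr ⟨P.mul_mem_left y h, Q.mul_mem_right x hyQ⟩⟩

theorem eq_inf_of_span_mul_le {P Q : Ideal R} (hP : P.IsPrime) {y : R}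
    (hyP : y ∉ P) (hIP : I ≤ P) (hIQ : I ≤ Q) (hyI : Ideal.span {y} * P ≤ I)
    (hQ : Q ≤ I ⊔ Ideal.span {y}) : I = P ⊓ Q := by
  refine le_antisymm (le_inf hIP hIQ) fun f hf => ?_
  obtain ⟨hfP, hfQ⟩ := Ideal.mem_inf.mp hf
  obtain ⟨a, i, hi, rfl⟩ := Ideal.mem_span_singleton_sup.mp (sup_comm I _ ▸ hQ hfQ)
  have ha : a ∈ P := (hP.mem_or_mem (by simpa using P.sub_mem hfP (hIP hi))).resolve_right hyP
  exact I.add_mem (mul_comm y a ▸ hyI (Ideal.mul_mem_mul (Ideal.mem_span_singleton_self y) ha)) hi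

variable {m : Ideal R} {t : B}

theorem mdepth_quotient_eq_one_of_colon (hπ : Function.Surjective π) (ht : ¬ IsUnit t)
    (htm : ∀ r ∈ m, t ∣ π r) {y r₀ : R} (hy : ∀ x, y * x ∈ I ↔ π x = 0)
    (hreg : ∀ r, (∀ x, r * x ∈ I → x ∈ I) →
      ∀ x, r * x ∈ I ⊔ Ideal.span {y} → x ∈ I ⊔ Ideal.span {y})
    (hIm : I ≤ m) (hr₀m : r₀ ∈ m) (hr₀ : ∀ x, r₀ * x ∈ I → x ∈ I) :
    mdepth m (R ⧸ I) = 1 := by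
  have hm : m ≠ ⊤ := fun h => ht (isUnit_of_dvd_one (by simpa using htm 1 (h ▸ Submodule.mem_top)))
  have hne : I ⊔ Ideal.span {r₀} ≠ ⊤ :=
    ne_top_of_le_ne_top hm (sup_le hIm ((Ideal.span_singleton_le_iff_mem _).mpr hr₀m))
  exact mdepth_quotient_eq_one hr₀m hr₀ hne fun r hr s hs hrI =>
    exists_mul_mem_sup_span_notMem hπ ht hy hrI (hreg r hrI) (htm r hr) (htm s hs)

theorem mdepth_quotient_ker_eq_one (hπ : Function.Surjective π) (ht : ¬ IsUnit t)
    (htm : ∀ r ∈ m, t ∣ π r) (hkm : RingHom.ker π ≤ m) {r₀ : R} (hr₀m : r₀ ∈ m)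
    (hr₀ : π r₀ ≠ 0) : mdepth m (R ⧸ RingHom.ker π) = 1 :=
  mdepth_quotient_eq_one_of_colon hπ ht htm (y := 1) (by simp [RingHom.mem_ker])
    (by simp [Ideal.span_singleton_one]) hkm hr₀m
    fun _ hx => ((RingHom.ker_isPrime π).mem_or_mem hx).resolve_left hr₀

theorem mdepth_quotient_ker_inf_eq_one (hπ : Function.Surjective π) (ht : ¬ IsUnit t)
    (htm : ∀ r ∈ m, t ∣ π r) {Q : Ideal R} (hQ : Q.IsPrime) (hQm : Q ≤ m) {y z : R}
    (hy : π y ≠ 0) (hz : π z = 0) (hzQ : z ∉ Q) (hzm : z ∈ m)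
    (hQy : RingHom.ker π ⊓ Q ⊔ Ideal.span {y} = Q) :
    mdepth m (R ⧸ RingHom.ker π ⊓ Q) = 1 := by
  have hP := RingHom.ker_isPrime π
  have hyQ : y ∈ Q := hQy ▸ Ideal.mem_sup_right (Ideal.mem_span_singleton_self y)
  refine mdepth_quotient_eq_one_of_colon hπ ht htm (y := y) (r₀ := y + z)
    (fun x => (mul_mem_inf_iff hP hy hyQ).trans RingHom.mem_ker) (fun r hr => ?_)
    (inf_le_right.trans hQm) (m.add_mem (hQm hyQ) hzm) fun x hx => ?_
  · have hrQ : r ∉ Q := fun hrQ => hzQ (Ideal.mem_inf.mp (hr z (Ideal.mem_inf.mpr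
      ⟨by simp [RingHom.mem_ker, hz], Q.mul_mem_right z hrQ⟩))).2
    rw [hQy]
    exact fun x hx => (hQ.mem_or_mem hx).resolve_left hrQ
  · have hP' : y + z ∉ RingHom.ker π := by simpa [RingHom.mem_ker, hz] using hy
    have hQ' : y + z ∉ Q := fun h => hzQ (by simpa using Q.sub_mem h hyQ)
    exact Ideal.mem_inf.mpr ⟨(hP.mem_or_mem (Ideal.mem_inf.mp hx).1).resolve_left hP',
      (hQ.mem_or_mem (Ideal.mem_inf.mp hx).2).resolve_left hQ'⟩

end ZeroDivisor

section Colon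

variable {R : Type} [CommRing R] {I P : Ideal R} {y : R}

noncomputable def quotEquivIdealQuotSupSpan (hy : ∀ x, y * x ∈ I ↔ x ∈ P) :
    (R ⧸ P) ≃ₗ[R] idealQuot I (I ⊔ Ideal.span {y}) :=
  let φ : R →ₗ[R] idealQuot I (I ⊔ Ideal.span {y}) := (Submodule.mkQ _).comp
    (LinearMap.toSpanSingleton R _ ⟨y, Ideal.mem_sup_right (Ideal.mem_span_singleton_self y)⟩)
  have hker : LinearMap.ker φ = P := by
    ext x
    simp [φ, Submodule.Quotient.mk_eq_zero, mul_comm x, hy]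
  have hsurj : Function.Surjective φ := by
    rintro ⟨⟨w, hw⟩⟩
    obtain ⟨a, i, hi, rfl⟩ := Ideal.mem_span_singleton_sup.mp (sup_comm I _ ▸ hw)
    refine ⟨a, (Submodule.Quotient.eq _).mpr ?_⟩
    simpa [φ] using I.neg_mem hi
  (Submodule.quotEquivOfEq _ _ hker.symm).trans (φ.quotKerEquivOfSurjective hsurj)

end Colon

section SpanX

variable {σ R : Type*} [CommRing R]

theorem ker_eq_span_X_image {A : Type*} [CommRing A] [Algebra R A]
    (φ : MvPolynomial σ R →ₐ[R] A) (ψ : A →ₐ[R] MvPolynomial σ R) {s : Set σ}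
    (hs : ∀ i ∈ s, φ (X i) = 0) (hsc : ∀ i ∉ s, ψ (φ (X i)) = X i) :
    RingHom.ker φ = Ideal.span (X '' s) := by
  refine le_antisymm (fun f hf => ?_) (Ideal.span_le.mpr ?_)
  · have h : (Ideal.Quotient.mkₐ R (Ideal.span (X '' s))).comp (ψ.comp φ) =
        Ideal.Quotient.mkₐ R _ := by
      refine MvPolynomial.algHom_ext fun i => ?_
      by_cases hi : i ∈ s
      · simp only [AlgHom.comp_apply, hs i hi, map_zero]
        exact (Ideal.Quotient.eq_zero_iff_mem.mpr
          (Ideal.subset_span (Set.mem_image_of_mem (X (R := R)) hi))).symm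
      · simp [hsc i hi]
    rw [← Ideal.Quotient.eq_zero_iff_mem, ← Ideal.Quotient.mkₐ_eq_mk R, ← h]
    simp [RingHom.mem_ker.mp hf]
  · rintro _ ⟨i, hi, rfl⟩
    exact hs i hi

theorem isPrime_span_X_image [IsDomain R] (s : Set σ) :
    (Ideal.span (X '' s) : Ideal (MvPolynomial σ R)).IsPrime := by
  rw [← ker_eq_span_X_image (aeval fun i => sᶜ.indicator X i) (AlgHom.id R _)
    (fun i hi => by simp [hi]) (fun i hi => by simp [hi])]
  exact RingHom.ker_isPrime _

theorem X_notMem_span_X_image [Nontrivial R] {s : Set σ} {i : σ} (hi : i ∉ s) :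
    (X i : MvPolynomial σ R) ∉ Ideal.span (X '' s) := by
  classical
  simpa [mem_ideal_span_X_image, support_X, Finsupp.single_apply] using hi

theorem span_X_compl_inf_sup_span_X {j : σ} {s : Set σ} (hj : j ∈ s) :
    Ideal.span (X '' {j}ᶜ) ⊓ Ideal.span (X '' s) ⊔ Ideal.span {X j} =
      (Ideal.span (X '' s) : Ideal (MvPolynomial σ R)) := by
  refine le_antisymm (sup_le inf_le_right
    ((Ideal.span_singleton_le_iff_mem _).mpr (Ideal.subset_span ⟨j, hj, rfl⟩))) ?_
  refine Ideal.span_le.mpr ?_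
  rintro _ ⟨i, hi, rfl⟩
  by_cases hij : i = j
  · exact hij ▸ Ideal.mem_sup_right (Ideal.mem_span_singleton_self _)
  · exact Ideal.mem_sup_left
      (Ideal.mem_inf.mpr ⟨Ideal.subset_span ⟨i, hij, rfl⟩, Ideal.subset_span ⟨i, hi, rfl⟩⟩)

variable [DecidableEq σ]

theorem ker_aeval_single_X (j : σ) :
    RingHom.ker (aeval (Pi.single j Polynomial.X) : MvPolynomial σ R →ₐ[R] Polynomial R) =
      Ideal.span (X '' {j}ᶜ) :=
  ker_eq_span_X_image _ (Polynomial.aeval (X j)) (fun i hi => by simp [Pi.single_eq_of_ne hi])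
    (fun i hi => by rw [Set.notMem_compl_iff, Set.mem_singleton_iff] at hi; simp [hi])

theorem aeval_single_X_surjective (j : σ) :
    Function.Surjective
      (aeval (Pi.single j Polynomial.X) : MvPolynomial σ R →ₐ[R] Polynomial R) :=
  fun p => ⟨Polynomial.aeval (X j) p, by rw [← Polynomial.aeval_algHom_apply]; simp⟩

theorem X_dvd_aeval_single_X {j : σ} {r : MvPolynomial σ R}
    (hr : r ∈ Ideal.span (Set.range (X (R := R)))) :
    (Polynomial.X : Polynomial R) ∣ aeval (Pi.single j Polynomial.X) r := by
  have h : Ideal.map (aeval (Pi.single j Polynomial.X) : MvPolynomial σ R →ₐ[R] Polynomial R)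
      (Ideal.span (Set.range X)) ≤ Ideal.span {Polynomial.X} := by
    rw [Ideal.map_span, Ideal.span_le]
    rintro _ ⟨_, ⟨i, rfl⟩, rfl⟩
    by_cases hij : i = j
    · simp [hij]
    · simp [Pi.single_eq_of_ne hij]
  exact Ideal.mem_span_singleton.mp (h (Ideal.mem_map_of_mem _ hr))

end SpanX

section MaxIdeal

variable {K : Type} [Field K] {n : ℕ}

theorem span_X_image_le_maxIdeal (s : Set (Fin n)) :
    Ideal.span (X '' s : Set (MvPolynomial (Fin n) K)) ≤ maxIdeal K n :=
  Ideal.span_mono (Set.image_subset_range _ _)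

theorem mdepth_quotient_span_X_compl_singleton (j : Fin n) :
    mdepth (maxIdeal K n)
      (MvPolynomial (Fin n) K ⧸ Ideal.span (X '' {j}ᶜ : Set (MvPolynomial (Fin n) K))) = 1 := by
  rw [← ker_aeval_single_X j]
  exact mdepth_quotient_ker_eq_one (aeval_single_X_surjective j) Polynomial.not_isUnit_X
    (fun _ hr => X_dvd_aeval_single_X hr)
    ((ker_aeval_single_X j).trans_le (span_X_image_le_maxIdeal _))
    (Ideal.subset_span ⟨j, rfl⟩) (by simp)

theorem mdepth_quotient_span_X_compl_inf_eq_one {j k : Fin n} {s : Set (Fin n)} (hj : j ∈ s)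
    (hk : k ∉ s) :
    mdepth (maxIdeal K n)
      (MvPolynomial (Fin n) K ⧸
        Ideal.span (X '' {j}ᶜ : Set (MvPolynomial (Fin n) K)) ⊓ Ideal.span (X '' s)) = 1 := by
  have hkj : k ≠ j := fun h => hk (h ▸ hj)
  rw [← ker_aeval_single_X j]
  exact mdepth_quotient_ker_inf_eq_one (aeval_single_X_surjective j) Polynomial.not_isUnit_X
    (fun _ hr => X_dvd_aeval_single_X hr) (isPrime_span_X_image s) (span_X_image_le_maxIdeal s)
    (y := X j) (z := X k) (by simp) (by simp [Pi.single_eq_of_ne hkj])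
    (X_notMem_span_X_image hk) (Ideal.subset_span ⟨k, rfl⟩)
    (by rw [ker_aeval_single_X]; exact span_X_compl_inf_sup_span_X hj)

end MaxIdeal

section Example

variable {K : Type} [Field K]

theorem map_inf_sup_span_X_last_mul_map_eq :
    Ideal.map (extMap K 3) (Ideal.span {X 0, X 1} ⊓ Ideal.span {X 0, X 2}) ⊔
        Ideal.span {X (Fin.last 3)} * Ideal.map (extMap K 3) (Ideal.span {X 0, X 1}) =
      Ideal.span (X '' {1}ᶜ) ⊓ Ideal.span (X '' {0, 1}) := by
  set W := Ideal.map (extMap K 3) (Ideal.span {X 0, X 1} ⊓ Ideal.span {X 0, X 2}) ⊔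
    Ideal.span {X (Fin.last 3)} * Ideal.map (extMap K 3) (Ideal.span {X 0, X 1})
  have hV : Ideal.map (extMap K 3) (Ideal.span {X 0, X 1}) = Ideal.span (X '' {0, 1}) := by
    simp [Ideal.map_span, Set.image_pair, extMap]
  have hU : Ideal.map (extMap K 3) (Ideal.span {X 0, X 2}) = Ideal.span {X 0, X 2} := by
    simp [Ideal.map_span, Set.image_pair, extMap]
  have hmemU (p : MvPolynomial (Fin 3) K) (h₁ : p ∈ Ideal.span {X 0, X 1})
      (h₂ : p ∈ Ideal.span {X 0, X 2}) : extMap K 3 p ∈ W :=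
    Ideal.mem_sup_left (Ideal.mem_map_of_mem _ (Ideal.mem_inf.mpr ⟨h₁, h₂⟩))
  have hX0 : X 0 ∈ W := by
    simpa [extMap] using hmemU (X 0) (Ideal.subset_span (by simp)) (Ideal.subset_span (by simp))
  refine eq_inf_of_span_mul_le (isPrime_span_X_image _) (y := X 1)
    (X_notMem_span_X_image (by simp)) ?_ ?_ ?_ ?_
  · have hX (i : Fin 4) (hi : i ≠ 1) :
        (X i : MvPolynomial (Fin 4) K) ∈ Ideal.span (X '' {1}ᶜ) :=
      Ideal.subset_span ⟨i, hi, rfl⟩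
    refine sup_le ((Ideal.map_mono inf_le_right).trans (hU.trans_le ?_))
      (Ideal.mul_le_left.trans ((Ideal.span_singleton_le_iff_mem _).mpr (hX _ (by decide))))
    exact Ideal.span_le.mpr (Set.insert_subset_iff.mpr ⟨hX 0 (by decide),
      Set.singleton_subset_iff.mpr (hX 2 (by decide))⟩)
  · exact sup_le (hV ▸ Ideal.map_mono inf_le_left) (hV ▸ Ideal.mul_le_right)
  · rw [Ideal.span_mul_span', Ideal.span_le, Set.singleton_mul, Set.image_image]
    rintro _ ⟨i, hi, rfl⟩
    fin_cases i
    · exact W.mul_mem_left _ hX0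
    · exact absurd rfl hi
    · simpa [extMap] using hmemU (X 1 * X 2) (Ideal.mul_mem_right _ _ (Ideal.subset_span (by simp)))
        (Ideal.mul_mem_left _ _ (Ideal.subset_span (by simp)))
    · show X 1 * X (Fin.last 3) ∈ W
      rw [mul_comm]
      exact Ideal.mem_sup_right (Ideal.mul_mem_mul (Ideal.mem_span_singleton_self _)
        (hV ▸ Ideal.subset_span ⟨1, by simp, rfl⟩))
  · refine Ideal.span_le.mpr ?_
    rintro _ ⟨i, hi | hi, rfl⟩ <;> subst hi
    exacts [Ideal.mem_sup_left hX0, Ideal.mem_sup_right (Ideal.mem_span_singleton_self _)]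

end Example

theorem example_depth_one {K : Type} [Field K] :
    let V : Ideal (MvPolynomial (Fin 3) K) := Ideal.span {X 0, X 1}
    let U : Ideal (MvPolynomial (Fin 3) K) :=
      Ideal.span {X 0, X 1} ⊓ Ideal.span {X 0, X 2}
    let W : Ideal (MvPolynomial (Fin 4) K) :=
      Ideal.map (extMap K 3) U ⊔
        Ideal.span {X (Fin.last 3)} * Ideal.map (extMap K 3) V
    mdepth (maxIdeal K 3) (idealQuot U V) = 1 ∧
      mdepth (maxIdeal K 3) (MvPolynomial (Fin 3) K ⧸ U) = 1 ∧
      mdepth (maxIdeal K 3) (MvPolynomial (Fin 3) K ⧸ V) = 1 ∧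
      mdepth (maxIdeal K 4) (MvPolynomial (Fin 4) K ⧸ W) = 1 := by
  intro V U W
  have hV : V = Ideal.span (X '' {2}ᶜ) := by
    simp only [V]; congr 1; ext p; simp [Fin.exists_fin_succ, eq_comm]
  have hQ : (Ideal.span {X 0, X 2} : Ideal (MvPolynomial (Fin 3) K)) = Ideal.span (X '' {1}ᶜ) := by
    congr 1; ext p; simp [Fin.exists_fin_succ, eq_comm]
  have hU : U = Ideal.span (X '' {2}ᶜ) ⊓ Ideal.span (X '' {1}ᶜ) := by
    rw [← hV, ← hQ]
  have hVU : V = Ideal.span (X '' {1}ᶜ) ⊓ Ideal.span (X '' {2}ᶜ) ⊔ Ideal.span {X 1} :=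
    hV.trans (span_X_compl_inf_sup_span_X (by simp)).symm
  have hcolon (x : MvPolynomial (Fin 3) K) :
      X 1 * x ∈ Ideal.span (X '' {1}ᶜ) ⊓ Ideal.span (X '' {2}ᶜ) ↔ x ∈ Ideal.span (X '' {1}ᶜ) :=
    mul_mem_inf_iff (isPrime_span_X_image _) (X_notMem_span_X_image (by simp))
      (Ideal.subset_span ⟨1, by simp, rfl⟩)
  refine ⟨?_, ?_, ?_, ?_⟩
  · rw [hU, inf_comm, hVU, ← mdepth_congr _ (quotEquivIdealQuotSupSpan hcolon)]
    exact mdepth_quotient_span_X_compl_singleton 1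
  · rw [hU]
    exact mdepth_quotient_span_X_compl_inf_eq_one (k := 1) (by simp) (by simp)
  · rw [hV]
    exact mdepth_quotient_span_X_compl_singleton 2
  · rw [show W = _ from map_inf_sup_span_X_last_mul_map_eq]
    exact mdepth_quotient_span_X_compl_inf_eq_one (k := 2) (by simp) (by simp)
end
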